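/- arXiv:2411.18397 — 4 statements merged into one kernel-verified Lean document; each statement's English description precedes it below -/
import Mathlib

section
/- Let φ : ℝ → ℝ be differentiable and ϑ-strongly convex for some ϑ > 0, let ε > 0, and let F̆, F̆_b : (0,1) → [0,∞) be measurable with F̆_b square-integrable on (0,1). If ∫₀¹ B_φ(F̆(t), F̆_b(t)) dt ≤ ε, then F̆ is integrable on (0,1) and ∫₀¹ F̆(t) dt ≤ ∫₀¹ F̆_b(t) dt + √(2ε/ϑ). -/
open MeasureTheory

/-- The Bregman divergence with (differentiable) generator `φ`. -/
noncomputable def bregman (φ : ℝ → ℝ) (z₁ z₂ : ℝ) : ℝ :=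
  φ z₁ - φ z₂ - deriv φ z₂ * (z₁ - z₂)

/-! Strong convexity gives `B_φ(x, y) ≥ ϑ/2 (x - y)²`, so `‖F̆ - F̆_b‖²_{L²} ≤ 2ε/ϑ`. Hence `F̆ ∈ L²`,
and on the probability space `(0,1)` the mean of `F̆ - F̆_b` is at most its `L²` norm, because
its variance is nonnegative. -/

open ENNReal

theorem ConvexOn.add_deriv_mul_sub_le {ψ : ℝ → ℝ} (hψ : ConvexOn ℝ Set.univ ψ) {x : ℝ}
    (hx : DifferentiableAt ℝ ψ x) (y : ℝ) : ψ x + deriv ψ x * (y - x) ≤ ψ y := by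
  rcases lt_trichotomy x y with hxy | rfl | hyx
  · have h := hψ.deriv_le_slope (Set.mem_univ x) (Set.mem_univ y) hxy hx
    rw [slope_def_field, le_div_iff₀ (sub_pos.2 hxy)] at h
    linarith
  · simp
  · have h := hψ.slope_le_deriv (Set.mem_univ y) (Set.mem_univ x) hyx hx
    rw [slope_def_field, div_le_iff₀ (sub_pos.2 hyx)] at h
    linarith

theorem mul_sq_sub_le_bregman {φ : ℝ → ℝ} {ϑ : ℝ}
    (hconv : ConvexOn ℝ Set.univ (fun x => φ x - ϑ / 2 * x ^ 2)) {z₂ : ℝ}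
    (hφ : DifferentiableAt ℝ φ z₂) (z₁ : ℝ) :
    ϑ / 2 * (z₁ - z₂) ^ 2 ≤ bregman φ z₁ z₂ := by
  have hderiv : HasDerivAt (fun x => φ x - ϑ / 2 * x ^ 2) (deriv φ z₂ - ϑ * z₂) z₂ :=
    (hφ.hasDerivAt.sub ((hasDerivAt_pow 2 z₂).const_mul (ϑ / 2))).congr_deriv (by norm_num; ring)
  have h := hconv.add_deriv_mul_sub_le hderiv.differentiableAt z₁
  rw [hderiv.deriv] at h
  unfold bregman
  linarith

theorem lintegral_sq_sub_le_of_lintegral_bregman_le {α : Type*} [MeasurableSpace α]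
    {μ : Measure α} {φ : ℝ → ℝ} (hφ : Differentiable ℝ φ) {ϑ : ℝ} (hϑ : 0 < ϑ)
    (hconv : ConvexOn ℝ Set.univ (fun x => φ x - ϑ / 2 * x ^ 2)) {ε : ℝ} {F G : α → ℝ}
    (hBW : ∫⁻ t, ENNReal.ofReal (bregman φ (F t) (G t)) ∂μ ≤ ENNReal.ofReal ε) :
    ∫⁻ t, ENNReal.ofReal ((F t - G t) ^ 2) ∂μ ≤ ENNReal.ofReal (2 * ε / ϑ) := by
  have hsplit (t : α) : ENNReal.ofReal ((F t - G t) ^ 2)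
      = ENNReal.ofReal (2 / ϑ) * ENNReal.ofReal (ϑ / 2 * (F t - G t) ^ 2) := by
    rw [← ENNReal.ofReal_mul (by positivity)]
    congr 1
    field_simp
  calc ∫⁻ t, ENNReal.ofReal ((F t - G t) ^ 2) ∂μ
      = ENNReal.ofReal (2 / ϑ) * ∫⁻ t, ENNReal.ofReal (ϑ / 2 * (F t - G t) ^ 2) ∂μ := by
        simp only [hsplit]
        exact lintegral_const_mul' _ _ ofReal_ne_top
    _ ≤ ENNReal.ofReal (2 / ϑ) * ENNReal.ofReal ε := by
        gcongr
        exact (lintegral_mono fun t => ofReal_le_ofReal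
          (mul_sq_sub_le_bregman hconv (hφ (G t)) (F t))).trans hBW
    _ = ENNReal.ofReal (2 * ε / ϑ) := by
        rw [← ENNReal.ofReal_mul (by positivity)]
        ring_nf

section ProbabilitySpace

variable {α : Type*} [MeasurableSpace α] {μ : Measure α} {g : α → ℝ}

theorem memLp_two_of_lintegral_sq_ne_top (hg : AEStronglyMeasurable g μ)
    (h : ∫⁻ t, ENNReal.ofReal (g t ^ 2) ∂μ ≠ ∞) : MemLp g 2 μ := by
  refine (memLp_two_iff_integrable_sq hg).2 ⟨hg.pow 2, ?_⟩
  rw [hasFiniteIntegral_iff_ofReal (ae_of_all _ fun t => sq_nonneg (g t))]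
  exact h.lt_top

theorem integral_le_sqrt_integral_sq [IsProbabilityMeasure μ] (hg : MemLp g 2 μ) :
    ∫ t, g t ∂μ ≤ √(∫ t, g t ^ 2 ∂μ) := by
  have hvar := ProbabilityTheory.variance_nonneg g μ
  rw [ProbabilityTheory.variance_eq_sub hg] at hvar
  exact Real.le_sqrt_of_sq_le (by simpa using hvar)

theorem integral_le_sqrt_of_lintegral_sq_le [IsProbabilityMeasure μ] {c : ℝ}
    (hg : AEStronglyMeasurable g μ)
    (h : ∫⁻ t, ENNReal.ofReal (g t ^ 2) ∂μ ≤ ENNReal.ofReal c) :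
    ∫ t, g t ∂μ ≤ √c := by
  have hL2 := memLp_two_of_lintegral_sq_ne_top hg (h.trans_lt ofReal_lt_top).ne
  have hsq : ENNReal.ofReal (∫ t, g t ^ 2 ∂μ) ≤ ENNReal.ofReal c := by
    rwa [ofReal_integral_eq_lintegral_ofReal ((memLp_two_iff_integrable_sq hg).1 hL2)
      (ae_of_all _ fun t => sq_nonneg (g t))]
  calc ∫ t, g t ∂μ ≤ √(∫ t, g t ^ 2 ∂μ) := integral_le_sqrt_integral_sq hL2
    _ ≤ √c := by
      rcases (ENNReal.ofReal_le_ofReal_iff').1 hsq with hle | hle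
      · exact Real.sqrt_le_sqrt hle
      · simp [Real.sqrt_eq_zero'.2 hle]

end ProbabilitySpace

instance isProbabilityMeasure_restrict_Ioo_zero_one :
    IsProbabilityMeasure (volume.restrict (Set.Ioo (0 : ℝ) 1)) :=
  ⟨by simp⟩

theorem integrable_and_mean_bound_of_bw_le_general
    (φ : ℝ → ℝ) (hφ : Differentiable ℝ φ) (ϑ : ℝ) (hϑ : 0 < ϑ)
    (hconv : ConvexOn ℝ Set.univ (fun x => φ x - ϑ / 2 * x ^ 2))
    (ε : ℝ)
    (F Fb : ℝ → ℝ) (hF : Measurable F)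
    (hFbL2 : MemLp Fb 2 (volume.restrict (Set.Ioo (0:ℝ) 1)))
    (hBW : ∫⁻ t in Set.Ioo (0:ℝ) 1, ENNReal.ofReal (bregman φ (F t) (Fb t))
            ≤ ENNReal.ofReal ε) :
    IntegrableOn F (Set.Ioo 0 1) ∧
      ∫ t in Set.Ioo (0:ℝ) 1, F t
        ≤ (∫ t in Set.Ioo (0:ℝ) 1, Fb t) + Real.sqrt (2 * ε / ϑ) := by
  have hsq := lintegral_sq_sub_le_of_lintegral_bregman_le hφ hϑ hconv hBW
  have hdiff : AEStronglyMeasurable (fun t => F t - Fb t) (volume.restrict (Set.Ioo (0:ℝ) 1)) :=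
    hF.aestronglyMeasurable.sub hFbL2.1
  have hF_int : IntegrableOn F (Set.Ioo 0 1) := by
    have hFL2 :=
      (memLp_two_of_lintegral_sq_ne_top hdiff (hsq.trans_lt ofReal_lt_top).ne).add hFbL2
    exact (sub_add_cancel F Fb ▸ hFL2).integrable one_le_two
  have hmean := integral_le_sqrt_of_lintegral_sq_le hdiff hsq
  rw [integral_sub hF_int (hFbL2.integrable one_le_two)] at hmean
  exact ⟨hF_int, by linarith⟩

/-- If `φ` is differentiable and `ϑ`-strongly convex, `ε > 0`, `F̆, F̆_b : (0,1) → [0,∞)`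
are measurable, `F̆_b` is square-integrable on `(0,1)`, and the Bregman–Wasserstein
divergence `∫₀¹ B_φ(F̆(t), F̆_b(t)) dt` is at most `ε`, then `F̆` is integrable on `(0,1)`
and `∫₀¹ F̆(t) dt ≤ ∫₀¹ F̆_b(t) dt + √(2ε/ϑ)`. -/
theorem integrable_and_mean_bound_of_bw_le
    (φ : ℝ → ℝ) (hφ : Differentiable ℝ φ) (ϑ : ℝ) (hϑ : 0 < ϑ)
    (hconv : ConvexOn ℝ Set.univ (fun x => φ x - ϑ / 2 * x ^ 2))
    (ε : ℝ) (hε : 0 < ε)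
    (F Fb : ℝ → ℝ) (hF : Measurable F) (hFb : Measurable Fb)
    (hF0 : ∀ t ∈ Set.Ioo (0:ℝ) 1, 0 ≤ F t) (hFb0 : ∀ t ∈ Set.Ioo (0:ℝ) 1, 0 ≤ Fb t)
    (hFbL2 : MemLp Fb 2 (volume.restrict (Set.Ioo (0:ℝ) 1)))
    (hBW : ∫⁻ t in Set.Ioo (0:ℝ) 1, ENNReal.ofReal (bregman φ (F t) (Fb t))
            ≤ ENNReal.ofReal ε) :
    IntegrableOn F (Set.Ioo 0 1) ∧
      ∫ t in Set.Ioo (0:ℝ) 1, F t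
        ≤ (∫ t in Set.Ioo (0:ℝ) 1, Fb t) + Real.sqrt (2 * ε / ϑ) :=
  integrable_and_mean_bound_of_bw_le_general φ hφ ϑ hϑ hconv ε F Fb hF hFbL2 hBW
end

section
/- Let φ : [0,∞) → ℝ be strictly convex with continuous derivative φ', let 0 ≤ m ≤ M, and let ε > 0. Then there exists a constant C ≥ 0 (depending only on φ, m, M, ε) such that for every measurable F̆ : (0,1) → [0,∞) and every measurable F̆_b : (0,1) → [m, M] with ∫₀¹ B_φ(F̆(t), F̆_b(t)) dt ≤ ε, one has ∫₀¹ F̆(t) dt ≤ C. -/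
/-!
Tangent lines lie below a convex `φ`, so `B_φ ≥ 0`, and the three-point identity
`B(z₁, z₂) = B(z₁, K) + B(K, z₂) + (φ' K - φ' z₂)(z₁ - K)` together with the monotonicity of `φ'`
gives, for `z₂ ≤ M ≤ K`, the linear lower bound `B(z₁, z₂) ≥ (φ' K - φ' M)(z₁ - K)`.
For `K = M + 1` strict convexity makes the slope `c = φ' K - φ' M` positive, so
`F̆ ≤ K + B_φ(F̆, F̆_b) / c` pointwise, and integrating over `(0,1)` gives `∫ F̆ ≤ K + ε / c`.
-/

open MeasureTheory

/-- The Bregman divergence with generator `φ` whose derivative (on `[0,∞)`) is `φ'`. -/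
noncomputable def bregmanD (φ φ' : ℝ → ℝ) (z₁ z₂ : ℝ) : ℝ :=
  φ z₁ - φ z₂ - φ' z₂ * (z₁ - z₂)

theorem bregmanD_eq_add_add (φ φ' : ℝ → ℝ) (x y z : ℝ) :
    bregmanD φ φ' x z = bregmanD φ φ' x y + bregmanD φ φ' y z + (φ' y - φ' z) * (x - y) := by
  unfold bregmanD
  ring

section Convex

variable {s : Set ℝ} {φ φ' : ℝ → ℝ}

theorem ConvexOn.add_mul_sub_le_of_hasDerivWithinAt (hφ : ConvexOn ℝ s φ) {x y f' : ℝ}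
    (hx : x ∈ s) (hy : y ∈ s) (hf' : HasDerivWithinAt φ f' s x) :
    φ x + f' * (y - x) ≤ φ y := by
  rcases lt_trichotomy x y with hxy | rfl | hxy
  · have hslope := hφ.le_slope_of_hasDerivWithinAt hx hy hxy hf'
    rw [slope_def_field, le_div_iff₀ (sub_pos.2 hxy)] at hslope
    linarith
  · simp
  · have hslope := hφ.slope_le_of_hasDerivWithinAt hy hx hxy hf'
    rw [slope_def_field, div_le_iff₀ (sub_pos.2 hxy)] at hslope
    linarith

theorem ConvexOn.bregmanD_nonneg (hφ : ConvexOn ℝ s φ) {x y : ℝ} (hx : x ∈ s) (hy : y ∈ s)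
    (hφ' : HasDerivWithinAt φ (φ' y) s y) : 0 ≤ bregmanD φ φ' x y := by
  have := hφ.add_mul_sub_le_of_hasDerivWithinAt hy hx hφ'
  unfold bregmanD
  linarith

theorem ConvexOn.monotoneOn_of_hasDerivWithinAt (hφ : ConvexOn ℝ s φ)
    (hφ' : ∀ x ∈ s, HasDerivWithinAt φ (φ' x) s x) : MonotoneOn φ' s := by
  intro x hx y hy hxy
  rcases eq_or_lt_of_le hxy with rfl | hxy
  · rfl
  exact (hφ.le_slope_of_hasDerivWithinAt hx hy hxy (hφ' x hx)).trans
    (hφ.slope_le_of_hasDerivWithinAt hx hy hxy (hφ' y hy))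

theorem StrictConvexOn.strictMonoOn_of_hasDerivWithinAt (hφ : StrictConvexOn ℝ s φ)
    (hφ' : ∀ x ∈ s, HasDerivWithinAt φ (φ' x) s x) : StrictMonoOn φ' s := by
  intro x hx y hy hxy
  exact (hφ.lt_slope_of_hasDerivWithinAt hx hy hxy (hφ' x hx)).trans_le
    (hφ.convexOn.slope_le_of_hasDerivWithinAt hx hy hxy (hφ' y hy))

theorem ConvexOn.mul_sub_le_bregmanD (hφ : ConvexOn ℝ s φ)
    (hφ' : ∀ x ∈ s, HasDerivWithinAt φ (φ' x) s x) {x y b K : ℝ} (hx : x ∈ s) (hy : y ∈ s)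
    (hb : b ∈ s) (hK : K ∈ s) (hyb : y ≤ b) (hbK : b ≤ K) :
    (φ' K - φ' b) * (x - K) ≤ bregmanD φ φ' x y := by
  have hmono := hφ.monotoneOn_of_hasDerivWithinAt hφ'
  rcases le_total x K with hxK | hKx
  · exact (mul_nonpos_of_nonneg_of_nonpos (sub_nonneg.2 (hmono hb hK hbK))
      (sub_nonpos.2 hxK)).trans (hφ.bregmanD_nonneg hx hy (hφ' y hy))
  · have hBxK := hφ.bregmanD_nonneg hx hK (hφ' K hK)
    have hBKy := hφ.bregmanD_nonneg hK hy (hφ' y hy)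
    have hslope : (φ' K - φ' b) * (x - K) ≤ (φ' K - φ' y) * (x - K) :=
      mul_le_mul_of_nonneg_right (by linarith [hmono hy hb hyb]) (sub_nonneg.2 hKx)
    rw [bregmanD_eq_add_add φ φ' x K y]
    linarith

end Convex

theorem setLIntegral_ofReal_le_of_le_add_mul {α : Type*} [MeasurableSpace α] {μ : Measure α}
    {s : Set α} (hs : MeasurableSet s) {f g : α → ℝ} {a b : ℝ} (hb : 0 ≤ b)
    (hfg : ∀ x ∈ s, f x ≤ a + b * g x) :
    ∫⁻ x in s, ENNReal.ofReal (f x) ∂μ ≤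
      ENNReal.ofReal a * μ s + ENNReal.ofReal b * ∫⁻ x in s, ENNReal.ofReal (g x) ∂μ :=
  calc ∫⁻ x in s, ENNReal.ofReal (f x) ∂μ
      ≤ ∫⁻ x in s, (ENNReal.ofReal a + ENNReal.ofReal b * ENNReal.ofReal (g x)) ∂μ :=
        setLIntegral_mono' hs fun x hx => (ENNReal.ofReal_le_ofReal (hfg x hx)).trans <|
          ENNReal.ofReal_add_le.trans_eq (by rw [ENNReal.ofReal_mul hb])
    _ = ENNReal.ofReal a * μ s + ENNReal.ofReal b * ∫⁻ x in s, ENNReal.ofReal (g x) ∂μ := by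
        rw [lintegral_add_left measurable_const, setLIntegral_const,
          lintegral_const_mul' _ _ ENNReal.ofReal_ne_top]

theorem lintegral_bounded_of_bw_le_general
    (φ φ' : ℝ → ℝ) (hconv : StrictConvexOn ℝ (Set.Ici 0) φ)
    (hderiv : ∀ x ∈ Set.Ici (0:ℝ), HasDerivWithinAt φ (φ' x) (Set.Ici 0) x)
    (m M : ℝ) (hm : 0 ≤ m) (hmM : m ≤ M) (ε : ℝ) (hε : 0 < ε) :
    ∃ C ≥ (0:ℝ), ∀ F Fb : ℝ → ℝ, Measurable F → Measurable Fb →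
      (∀ t ∈ Set.Ioo (0:ℝ) 1, 0 ≤ F t) → (∀ t ∈ Set.Ioo (0:ℝ) 1, Fb t ∈ Set.Icc m M) →
      (∫⁻ t in Set.Ioo (0:ℝ) 1, ENNReal.ofReal (bregmanD φ φ' (F t) (Fb t))
        ≤ ENNReal.ofReal ε) →
      ∫⁻ t in Set.Ioo (0:ℝ) 1, ENNReal.ofReal (F t) ≤ ENNReal.ofReal C := by
  have hM : M ∈ Set.Ici (0:ℝ) := hm.trans hmM
  have hK : M + 1 ∈ Set.Ici (0:ℝ) := Set.mem_Ici.2 (by linarith [hM.out])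
  set c := φ' (M + 1) - φ' M
  have hc : 0 < c :=
    sub_pos.2 (hconv.strictMonoOn_of_hasDerivWithinAt hderiv hM hK (lt_add_one M))
  have hc_inv : 0 ≤ c⁻¹ := inv_nonneg.2 hc.le
  have hcε : 0 ≤ c⁻¹ * ε := mul_nonneg hc_inv hε.le
  refine ⟨M + 1 + c⁻¹ * ε, add_nonneg hK hcε, fun F Fb _ _ hF hFb hB => ?_⟩
  have hpointwise : ∀ t ∈ Set.Ioo (0:ℝ) 1,
      F t ≤ M + 1 + c⁻¹ * bregmanD φ φ' (F t) (Fb t) := fun t ht => by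
    rw [← sub_le_iff_le_add', le_inv_mul_iff₀ hc]
    exact hconv.convexOn.mul_sub_le_bregmanD hderiv (hF t ht) (hm.trans (hFb t ht).1) hM hK
      (hFb t ht).2 (by linarith)
  calc ∫⁻ t in Set.Ioo (0:ℝ) 1, ENNReal.ofReal (F t)
      ≤ ENNReal.ofReal (M + 1) * volume (Set.Ioo (0:ℝ) 1) + ENNReal.ofReal c⁻¹ *
          ∫⁻ t in Set.Ioo (0:ℝ) 1, ENNReal.ofReal (bregmanD φ φ' (F t) (Fb t)) :=
        setLIntegral_ofReal_le_of_le_add_mul measurableSet_Ioo hc_inv hpointwise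
    _ ≤ ENNReal.ofReal (M + 1) * 1 + ENNReal.ofReal c⁻¹ * ENNReal.ofReal ε := by
        rw [Real.volume_Ioo, sub_zero, ENNReal.ofReal_one]
        gcongr
    _ = ENNReal.ofReal (M + 1 + c⁻¹ * ε) := by
        rw [mul_one, ← ENNReal.ofReal_mul hc_inv, ← ENNReal.ofReal_add hK hcε]

/-- If `φ : [0,∞) → ℝ` is strictly convex with continuous derivative `φ'`, `0 ≤ m ≤ M`
and `ε > 0`, then there is a constant `C ≥ 0` such that for every measurable
`F̆ : (0,1) → [0,∞)` and measurable `F̆_b : (0,1) → [m,M]` with Bregman–Wasserstein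
divergence `∫₀¹ B_φ(F̆(t), F̆_b(t)) dt ≤ ε`, one has `∫₀¹ F̆(t) dt ≤ C`. -/
theorem lintegral_bounded_of_bw_le
    (φ φ' : ℝ → ℝ) (hconv : StrictConvexOn ℝ (Set.Ici 0) φ)
    (hderiv : ∀ x ∈ Set.Ici (0:ℝ), HasDerivWithinAt φ (φ' x) (Set.Ici 0) x)
    (hcont : ContinuousOn φ' (Set.Ici 0))
    (m M : ℝ) (hm : 0 ≤ m) (hmM : m ≤ M) (ε : ℝ) (hε : 0 < ε) :
    ∃ C ≥ (0:ℝ), ∀ F Fb : ℝ → ℝ, Measurable F → Measurable Fb →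
      (∀ t ∈ Set.Ioo (0:ℝ) 1, 0 ≤ F t) → (∀ t ∈ Set.Ioo (0:ℝ) 1, Fb t ∈ Set.Icc m M) →
      (∫⁻ t in Set.Ioo (0:ℝ) 1, ENNReal.ofReal (bregmanD φ φ' (F t) (Fb t))
        ≤ ENNReal.ofReal ε) →
      ∫⁻ t in Set.Ioo (0:ℝ) 1, ENNReal.ofReal (F t) ≤ ENNReal.ofReal C :=
  lintegral_bounded_of_bw_le_general φ φ' hconv hderiv m M hm hmM ε hε
end

section
/- Let m' : (0,∞) → ℝ be continuous and strictly increasing, let λ, μ ≥ 0, let A : (0,1) → ℝ be continuous and non-increasing, and let b : (0,1) → ℝ be left-continuous and non-decreasing. For t ∈ (0,1) define G(t) := inf{ y > 0 : m'(y) + λ A(t) − μ b(t) ≥ 0 } ∈ (0,∞], with inf ∅ := ∞. Then G is left-continuous at every point t ∈ (0,1) where G(t) < ∞: for every non-decreasing sequence tₙ ↑ t one has G(tₙ) → G(t). -/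
/-- The candidate optimal quantile function
`G(t) = inf{ y > 0 : m'(y) + λ A(t) − μ b(t) ≥ 0 } ∈ (0,∞]`, with `inf ∅ = ∞`
(realised via `sInf` in `ℝ≥0∞`, where `sInf ∅ = ⊤`). -/
noncomputable def Gcand (m' A b : ℝ → ℝ) (lam mu : ℝ) (t : ℝ) : ENNReal :=
  sInf (ENNReal.ofReal '' {y : ℝ | 0 < y ∧ 0 ≤ m' y + lam * A t - mu * b t})

/-!
Writing `κ(t) = μ b(t) − λ A(t)`, one has `G = m'⁻ ∘ κ`, where `m'⁻(x) = inf{y > 0 : x ≤ m'(y)}`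
is the generalized inverse of `m'`. The inverse is monotone for any `m'`, and lower semicontinuous
because `m'` is strictly increasing: if `y < m'⁻(x)` then `m'(y) < x`, and for every `x'` with
`m'(y) < x'` all points admissible for `x'` lie above `y`. Along `tₙ ↑ t` the monotonicity of `A`
and `b` gives `κ(tₙ) ≤ κ(t)`, hence `G(tₙ) ≤ G(t)`, while continuity of `A` and left-continuity
of `b` give `κ(tₙ) → κ(t)`, so lower semicontinuity yields the reverse inequality in the limit.
-/

open Set Filter Topology

noncomputable def genInv (g : ℝ → ℝ) (x : ℝ) : ENNReal :=
  sInf (ENNReal.ofReal '' {y : ℝ | 0 < y ∧ x ≤ g y})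

section genInv

variable {g : ℝ → ℝ}

theorem genInv_mono (g : ℝ → ℝ) : Monotone (genInv g) := fun _ _ hxx' =>
  sInf_le_sInf <| image_mono fun _ ⟨hy, hxy⟩ => ⟨hy, hxx'.trans hxy⟩

theorem lt_of_ofReal_lt_genInv {x y : ℝ} (hy : 0 < y) (h : ENNReal.ofReal y < genInv g x) :
    g y < x := by
  by_contra! hxy
  exact (sInf_le ⟨y, ⟨hy, hxy⟩, rfl⟩ : genInv g x ≤ _).not_gt h

theorem ofReal_le_genInv (hg : StrictMonoOn g (Ioi 0)) {x y : ℝ} (hy : 0 < y) (hxy : g y < x) :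
    ENNReal.ofReal y ≤ genInv g x := by
  refine le_sInf ?_
  rintro _ ⟨z, ⟨hz, hxz⟩, rfl⟩
  refine ENNReal.ofReal_le_ofReal (not_lt.1 fun hzy => ?_)
  linarith [hg (mem_Ioi.2 hz) (mem_Ioi.2 hy) hzy]

theorem genInv_lowerSemicontinuous (hg : StrictMonoOn g (Ioi 0)) :
    LowerSemicontinuous (genInv g) := by
  intro x a ha
  obtain ⟨r, har, hrx⟩ := exists_between ha
  have hr_top : r ≠ ⊤ := (hrx.trans_le le_top).ne
  have hr_pos : 0 < r.toReal := ENNReal.toReal_pos (pos_of_gt har).ne' hr_top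
  rw [← ENNReal.ofReal_toReal hr_top] at har hrx
  filter_upwards [lt_mem_nhds (lt_of_ofReal_lt_genInv hr_pos hrx)] with x' hx'
  exact har.trans_le (ofReal_le_genInv hg hr_pos hx')

end genInv

theorem LowerSemicontinuousAt.tendsto_of_eventually_le {α β ι : Type*} [TopologicalSpace α]
    [LinearOrder β] [TopologicalSpace β] [OrderTopology β] {f : α → β} {x : α} {u : ι → α}
    {l : Filter ι} (hf : LowerSemicontinuousAt f x) (hu : Tendsto u l (𝓝 x))
    (hle : ∀ᶠ n in l, f (u n) ≤ f x) : Tendsto (f ∘ u) l (𝓝 (f x)) :=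
  tendsto_order.2 ⟨fun _ ha => hu.eventually (hf _ ha),
    fun _ ha => hle.mono fun _ hn => hn.trans_lt ha⟩

theorem Gcand_eq_genInv (m' A b : ℝ → ℝ) (lam mu t : ℝ) :
    Gcand m' A b lam mu t = genInv m' (mu * b t - lam * A t) := by
  unfold Gcand genInv
  congr! 4 with y
  rw [← sub_nonneg (b := mu * b t - lam * A t) (a := m' y)]
  ring_nf

theorem Gcand_left_continuous_general
    (m' : ℝ → ℝ) (hm : StrictMonoOn m' (Set.Ioi 0))
    (lam mu : ℝ) (hlam : 0 ≤ lam) (hmu : 0 ≤ mu)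
    (A b : ℝ → ℝ)
    (hAc : ContinuousOn A (Set.Ioo 0 1)) (hA : AntitoneOn A (Set.Ioo 0 1))
    (hbl : ∀ t ∈ Set.Ioo (0:ℝ) 1, ContinuousWithinAt b (Set.Iic t) t)
    (hb : MonotoneOn b (Set.Ioo 0 1)) :
    ∀ t ∈ Set.Ioo (0:ℝ) 1, Gcand m' A b lam mu t ≠ ⊤ →
      ∀ s : ℕ → ℝ, Monotone s → (∀ n, s n ∈ Set.Ioo (0:ℝ) 1) →
        Filter.Tendsto s Filter.atTop (nhds t) →
        Filter.Tendsto (fun n => Gcand m' A b lam mu (s n)) Filter.atTop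
          (nhds (Gcand m' A b lam mu t)) := by
  intro t ht _ s hs hs_mem hst
  have hs_le : ∀ n, s n ≤ t := hs.ge_of_tendsto hst
  have hA_lim : Tendsto (A ∘ s) atTop (𝓝 (A t)) :=
    (hAc t ht).tendsto.comp (tendsto_nhdsWithin_of_tendsto_nhds_of_eventually_within s hst
      (Eventually.of_forall hs_mem))
  have hb_lim : Tendsto (b ∘ s) atTop (𝓝 (b t)) :=
    (hbl t ht).tendsto.comp (tendsto_nhdsWithin_of_tendsto_nhds_of_eventually_within s hst
      (Eventually.of_forall hs_le))
  have hκ_le : ∀ n, mu * b (s n) - lam * A (s n) ≤ mu * b t - lam * A t := fun n => by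
    have := mul_le_mul_of_nonneg_left (hA (hs_mem n) ht (hs_le n)) hlam
    have := mul_le_mul_of_nonneg_left (hb (hs_mem n) ht (hs_le n)) hmu
    linarith
  simp only [Gcand_eq_genInv]
  exact (genInv_lowerSemicontinuous hm).lowerSemicontinuousAt _ |>.tendsto_of_eventually_le
    (f := genInv m') ((hb_lim.const_mul mu).sub (hA_lim.const_mul lam))
    (Eventually.of_forall fun n => genInv_mono m' (hκ_le n))

/-- If `m' : (0,∞) → ℝ` is continuous and strictly increasing, `λ, μ ≥ 0`,
`A : (0,1) → ℝ` is continuous and non-increasing, and `b : (0,1) → ℝ` is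
left-continuous and non-decreasing, then `G` is left-continuous at every
`t ∈ (0,1)` with `G(t) < ∞`: for every non-decreasing sequence `tₙ ↑ t` in `(0,1)`,
`G(tₙ) → G(t)`. -/
theorem Gcand_left_continuous
    (m' : ℝ → ℝ) (hmc : ContinuousOn m' (Set.Ioi 0)) (hm : StrictMonoOn m' (Set.Ioi 0))
    (lam mu : ℝ) (hlam : 0 ≤ lam) (hmu : 0 ≤ mu)
    (A b : ℝ → ℝ)
    (hAc : ContinuousOn A (Set.Ioo 0 1)) (hA : AntitoneOn A (Set.Ioo 0 1))
    (hbl : ∀ t ∈ Set.Ioo (0:ℝ) 1, ContinuousWithinAt b (Set.Iic t) t)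
    (hb : MonotoneOn b (Set.Ioo 0 1)) :
    ∀ t ∈ Set.Ioo (0:ℝ) 1, Gcand m' A b lam mu t ≠ ⊤ →
      ∀ s : ℕ → ℝ, Monotone s → (∀ n, s n ∈ Set.Ioo (0:ℝ) 1) →
        Filter.Tendsto s Filter.atTop (nhds t) →
        Filter.Tendsto (fun n => Gcand m' A b lam mu (s n)) Filter.atTop
          (nhds (Gcand m' A b lam mu t)) :=
  Gcand_left_continuous_general m' hm lam mu hlam hmu A b hAc hA hbl hb
end

section
/- Let φ : [0,∞) → ℝ be convex and differentiable, let u : [0,∞) → ℝ be strictly increasing, let A : (0,1) → (0,∞) be integrable with ∫₀¹ A(t) dt > 0, let ε > 0, x₀ > 0, c₀ > 0, and let F̆, F̆_b : (0,1) → [0,∞) be measurable. Assume: t ↦ φ'(F̆(t)), t ↦ φ'(F̆(t)+c₀), and t ↦ φ'(F̆_b(t)) are integrable on (0,1); t ↦ u(F̆(t)+c) is integrable for every c ∈ [0,c₀]; ∫₀¹ B_φ(F̆(t), F̆_b(t)) dt < ε; and ∫₀¹ F̆(t) A(t) dt < x₀. Then there exists c̃ ∈ (0, c₀] such that ∫₀¹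 B_φ(F̆(t)+c̃, F̆_b(t)) dt ≤ ε, ∫₀¹ (F̆(t)+c̃) A(t) dt ≤ x₀, and ∫₀¹ u(F̆(t)+c̃) dt > ∫₀¹ u(F̆(t)) dt. Consequently, at an optimum of the expected-utility problem with budget and Bregman–Wasserstein constraints, at least one of the two constraints must be binding. -/
/-!
Shifting `F` by `c` changes the Bregman–Wasserstein divergence by
`∫ φ (F + c) - φ F - c φ' Fb`, which by convexity is at most `c ∫ φ' (F + c₀) - φ' Fb`
for `c ≤ c₀`, and changes the cost by `c ∫ A`. Both changes are `O(c)`, so strict slack in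
both constraints survives all small shifts, while strict monotonicity of `u` makes every
positive shift strictly better.
-/

open MeasureTheory

open Filter Topology

lemma bregmanD_add_eq (φ φ' : ℝ → ℝ) (z c w : ℝ) :
    bregmanD φ φ' (z + c) w = bregmanD φ φ' z w + (φ (z + c) - φ z - c * φ' w) := by
  simp only [bregmanD]; ring

lemma ConvexOn.sub_le_mul_of_hasDerivWithinAt {s : Set ℝ} {φ : ℝ → ℝ} {z c d φ'd : ℝ}
    (hφ : ConvexOn ℝ s φ) (hz : z ∈ s) (hzd : z + d ∈ s)
    (hderiv : HasDerivWithinAt φ φ'd s (z + d)) (hc : 0 < c) (hcd : c ≤ d) :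
    φ (z + c) - φ z ≤ c * φ'd := by
  have hzc : z + c ∈ s := hφ.1.ordConnected.out hz hzd ⟨by linarith, by linarith⟩
  have hslope : slope φ z (z + c) ≤ φ'd :=
    (hφ.slope_mono hz ⟨hzc, by simp [hc.ne']⟩ ⟨hzd, by simpa using (hc.trans_le hcd).ne'⟩
      (by linarith)).trans (hφ.slope_le_of_hasDerivWithinAt hz hzd (by linarith) hderiv)
  rwa [slope_def_field, add_sub_cancel_left, div_le_iff₀ hc, mul_comm] at hslope

lemma bregmanD_add_le {φ φ' : ℝ → ℝ} (hφconv : ConvexOn ℝ (Set.Ici 0) φ)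
    (hφderiv : ∀ x ∈ Set.Ici (0:ℝ), HasDerivWithinAt φ (φ' x) (Set.Ici 0) x)
    {z w c d : ℝ} (hz : 0 ≤ z) (hc : 0 < c) (hcd : c ≤ d) :
    bregmanD φ φ' (z + c) w ≤ bregmanD φ φ' z w + c * (φ' (z + d) - φ' w) := by
  have hzd : z + d ∈ Set.Ici (0:ℝ) := Set.mem_Ici.2 (by linarith)
  have := hφconv.sub_le_mul_of_hasDerivWithinAt hz hzd (hφderiv _ hzd) hc hcd
  rw [bregmanD_add_eq]
  linarith

section Perturbation

variable {α : Type*} [MeasurableSpace α] {μ : Measure α}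

lemma eventually_lintegral_ofReal_add_mul_lt {g h : α → ℝ} {ε : ENNReal} (hh : Integrable h μ)
    (hg : ∫⁻ a, ENNReal.ofReal (g a) ∂μ < ε) :
    ∀ᶠ c in 𝓝 (0:ℝ), ∫⁻ a, ENNReal.ofReal (g a + c * h a) ∂μ < ε := by
  set I := ∫⁻ a, ENNReal.ofReal (g a) ∂μ
  have hbound : ∀ c : ℝ, ∫⁻ a, ENNReal.ofReal (g a + c * h a) ∂μ
      ≤ I + ‖c‖ₑ * ∫⁻ a, ‖h a‖ₑ ∂μ := fun c => calc
    _ ≤ ∫⁻ a, ENNReal.ofReal (g a) + ‖c * h a‖ₑ ∂μ := lintegral_mono fun a =>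
        ENNReal.ofReal_add_le.trans (by gcongr; exact Real.ofReal_le_enorm _)
    _ = _ := by
        simp only [enorm_mul]
        rw [lintegral_add_right' _ (hh.aemeasurable.enorm.const_mul _),
          lintegral_const_mul'' _ hh.aemeasurable.enorm]
  have htend : Tendsto (fun c : ℝ => I + ‖c‖ₑ * ∫⁻ a, ‖h a‖ₑ ∂μ) (𝓝 0) (𝓝 I) := by
    simpa using
      (ENNReal.Tendsto.mul_const (continuous_enorm.tendsto (0:ℝ)) (Or.inr hh.2.ne)).const_add I
  exact (htend.eventually (gt_mem_nhds hg)).mono fun c hc => (hbound c).trans_lt hc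

lemma setIntegral_lt_setIntegral_of_forall_lt {s : Set α} {f g : α → ℝ} (hs : MeasurableSet s)
    (hμs : μ s ≠ 0) (hf : IntegrableOn f s μ) (hg : IntegrableOn g s μ)
    (hlt : ∀ x ∈ s, f x < g x) :
    ∫ x in s, f x ∂μ < ∫ x in s, g x ∂μ := by
  have hpos : 0 < ∫ x in s, (g x - f x) ∂μ := by
    rw [setIntegral_pos_iff_support_of_nonneg_ae
      ((ae_restrict_iff' hs).2 (ae_of_all _ fun x hx => (sub_pos.2 (hlt x hx)).le)) (hg.sub hf),
      Set.inter_eq_right.2 fun x hx => Function.mem_support.2 (sub_pos.2 (hlt x hx)).ne']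
    exact pos_iff_ne_zero.2 hμs
  rwa [integral_sub hg hf, sub_pos] at hpos

end Perturbation

theorem exists_shift_improving_general
    (φ φ' u : ℝ → ℝ)
    (hφconv : ConvexOn ℝ (Set.Ici 0) φ)
    (hφderiv : ∀ x ∈ Set.Ici (0:ℝ), HasDerivWithinAt φ (φ' x) (Set.Ici 0) x)
    (hu : StrictMonoOn u (Set.Ici 0))
    (A : ℝ → ℝ) (hAint : IntegrableOn A (Set.Ioo 0 1))
    (ε x₀ c₀ : ℝ) (hc₀ : 0 < c₀)
    (F Fb : ℝ → ℝ)
    (hF0 : ∀ t ∈ Set.Ioo (0:ℝ) 1, 0 ≤ F t)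
    (hint2 : IntegrableOn (fun t => φ' (F t + c₀)) (Set.Ioo 0 1))
    (hint3 : IntegrableOn (fun t => φ' (Fb t)) (Set.Ioo 0 1))
    (hintu : ∀ c ∈ Set.Icc (0:ℝ) c₀, IntegrableOn (fun t => u (F t + c)) (Set.Ioo 0 1))
    (hBW : ∫⁻ t in Set.Ioo (0:ℝ) 1, ENNReal.ofReal (bregmanD φ φ' (F t) (Fb t))
            < ENNReal.ofReal ε)
    (hcost : ∫⁻ t in Set.Ioo (0:ℝ) 1, ENNReal.ofReal (F t * A t) < ENNReal.ofReal x₀) :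
    ∃ c ∈ Set.Ioc (0:ℝ) c₀,
      (∫⁻ t in Set.Ioo (0:ℝ) 1, ENNReal.ofReal (bregmanD φ φ' (F t + c) (Fb t))
          ≤ ENNReal.ofReal ε) ∧
      (∫⁻ t in Set.Ioo (0:ℝ) 1, ENNReal.ofReal ((F t + c) * A t) ≤ ENNReal.ofReal x₀) ∧
      (∫ t in Set.Ioo (0:ℝ) 1, u (F t)) < ∫ t in Set.Ioo (0:ℝ) 1, u (F t + c) := by
  have hsmall : Set.Ioc 0 c₀ ∈ 𝓝[>] (0:ℝ) := Ioc_mem_nhdsGT hc₀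
  have hdiv : ∀ᶠ c in 𝓝[>] (0:ℝ), ∫⁻ t in Set.Ioo (0:ℝ) 1,
      ENNReal.ofReal (bregmanD φ φ' (F t + c) (Fb t)) ≤ ENNReal.ofReal ε := by
    filter_upwards [nhdsWithin_le_nhds
      (eventually_lintegral_ofReal_add_mul_lt (hint2.sub hint3) hBW), hsmall] with c hc hc'
    exact (setLIntegral_mono' measurableSet_Ioo fun t ht => ENNReal.ofReal_le_ofReal
      (bregmanD_add_le hφconv hφderiv (hF0 t ht) hc'.1 hc'.2)).trans hc.le
  have hbudget : ∀ᶠ c in 𝓝[>] (0:ℝ), ∫⁻ t in Set.Ioo (0:ℝ) 1,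
      ENNReal.ofReal ((F t + c) * A t) ≤ ENNReal.ofReal x₀ := by
    filter_upwards [nhdsWithin_le_nhds (eventually_lintegral_ofReal_add_mul_lt hAint hcost)]
      with c hc
    simpa only [add_mul] using hc.le
  have hutility : ∀ c ∈ Set.Ioc 0 c₀,
      (∫ t in Set.Ioo (0:ℝ) 1, u (F t)) < ∫ t in Set.Ioo (0:ℝ) 1, u (F t + c) :=
    fun c hc => setIntegral_lt_setIntegral_of_forall_lt measurableSet_Ioo (by simp)
      (by simpa using hintu 0 ⟨le_rfl, hc₀.le⟩) (hintu c (Set.Ioc_subset_Icc_self hc))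
      fun t ht => hu (hF0 t ht) (Set.mem_Ici.2 (by linarith [hF0 t ht, hc.1])) (by linarith [hc.1])
  obtain ⟨c, ⟨hc_div, hc_budget⟩, hc⟩ := ((hdiv.and hbudget).and hsmall).exists
  exact ⟨c, hc, hc_div, hc_budget, hutility c hc⟩

/-- If the Bregman–Wasserstein constraint and the budget constraint are both slack at `F̆`,
then shifting `F̆` up by a small constant `c̃ ∈ (0, c₀]` keeps both constraints satisfied
while strictly increasing expected utility.  Consequently, at an optimum at least one of
the two constraints must be binding. -/
theorem exists_shift_improving
    (φ φ' u : ℝ → ℝ)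
    (hφconv : ConvexOn ℝ (Set.Ici 0) φ)
    (hφderiv : ∀ x ∈ Set.Ici (0:ℝ), HasDerivWithinAt φ (φ' x) (Set.Ici 0) x)
    (hu : StrictMonoOn u (Set.Ici 0))
    (A : ℝ → ℝ) (hAint : IntegrableOn A (Set.Ioo 0 1))
    (hApos : ∀ t ∈ Set.Ioo (0:ℝ) 1, 0 < A t)
    (hAI : 0 < ∫ t in Set.Ioo (0:ℝ) 1, A t)
    (ε x₀ c₀ : ℝ) (hε : 0 < ε) (hx₀ : 0 < x₀) (hc₀ : 0 < c₀)
    (F Fb : ℝ → ℝ) (hF : Measurable F) (hFb : Measurable Fb)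
    (hF0 : ∀ t ∈ Set.Ioo (0:ℝ) 1, 0 ≤ F t) (hFb0 : ∀ t ∈ Set.Ioo (0:ℝ) 1, 0 ≤ Fb t)
    (hint1 : IntegrableOn (fun t => φ' (F t)) (Set.Ioo 0 1))
    (hint2 : IntegrableOn (fun t => φ' (F t + c₀)) (Set.Ioo 0 1))
    (hint3 : IntegrableOn (fun t => φ' (Fb t)) (Set.Ioo 0 1))
    (hintu : ∀ c ∈ Set.Icc (0:ℝ) c₀, IntegrableOn (fun t => u (F t + c)) (Set.Ioo 0 1))
    (hBW : ∫⁻ t in Set.Ioo (0:ℝ) 1, ENNReal.ofReal (bregmanD φ φ' (F t) (Fb t))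
            < ENNReal.ofReal ε)
    (hcost : ∫⁻ t in Set.Ioo (0:ℝ) 1, ENNReal.ofReal (F t * A t) < ENNReal.ofReal x₀) :
    ∃ c ∈ Set.Ioc (0:ℝ) c₀,
      (∫⁻ t in Set.Ioo (0:ℝ) 1, ENNReal.ofReal (bregmanD φ φ' (F t + c) (Fb t))
          ≤ ENNReal.ofReal ε) ∧
      (∫⁻ t in Set.Ioo (0:ℝ) 1, ENNReal.ofReal ((F t + c) * A t) ≤ ENNReal.ofReal x₀) ∧
      (∫ t in Set.Ioo (0:ℝ) 1, u (F t)) < ∫ t in Set.Ioo (0:ℝ) 1, u (F t + c) :=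
  exists_shift_improving_general φ φ' u hφconv hφderiv hu A hAint ε x₀ c₀ hc₀ F Fb hF0 hint2 hint3
    hintu hBW hcost
end
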